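/- arXiv:2104.00101 — 5 statements merged into one kernel-verified Lean document; each statement's English description precedes it below -/
import Mathlib

section
/- Let α₁, …, α_r be continuously differentiable extended class 𝒦 functions, q : [t₀, ∞) → ℝ continuous, and p : [t₀, ∞) × ℝ^r → ℝ^r the associated cascade vector field as in the context. Let ψ : [t₀, ∞) → ℝ^r be a solution of ψ̇(t) = p(t, ψ(t)) with ψ(t₀) = v₀, and let m : [t₀, ∞) → ℝ^r be continuously differentiable with ṁ(t) ⪯ p(t, m(t)) for all t ≥ t₀ and m(t₀) ⪯ v₀. Then m(t) ⪯ ψ(t) componentwise for all t ≥ t₀. -/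
/-!
The cascade is upper triangular: the `i`-th equation involves only `v i`, through the
decreasing term `-α (v i)`, and the input `v (i + 1)` (or `q` for the last component).
So the comparison can be propagated from the last component upwards: once
`m (i + 1) ≤ ψ (i + 1)` is known, the `i`-th components of `m` and `ψ` are a sub- and a
supersolution of the same scalar equation `x' = -α x + ψ (i + 1)` with decreasing right-hand
side, and the scalar comparison principle applies.
-/

open Set

theorem image_le_of_sub_super_solution_of_antitone {F : ℝ → ℝ → ℝ} {f f' g g' : ℝ → ℝ}
    {a b : ℝ} (hF : ∀ t ∈ Ico a b, Antitone (F t))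
    (hf : ContinuousOn f (Icc a b)) (hf' : ∀ t ∈ Ico a b, HasDerivWithinAt f (f' t) (Ici t) t)
    (hg : ContinuousOn g (Icc a b)) (hg' : ∀ t ∈ Ico a b, HasDerivWithinAt g (g' t) (Ici t) t)
    (hf_sub : ∀ t ∈ Ico a b, f' t ≤ F t (f t)) (hg_super : ∀ t ∈ Ico a b, F t (g t) ≤ g' t)
    (ha : f a ≤ g a) : ∀ t ∈ Icc a b, f t ≤ g t := by
  intro t ht
  -- `g + ε (x - a)` is a strict supersolution, so `f` cannot cross it.
  have below_lift : ∀ ε > 0, f t ≤ g t + ε * (t - a) := by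
    intro ε hε
    refine image_le_of_deriv_right_lt_deriv_boundary' hf hf'
      (B := fun x => g x + ε * (x - a)) (B' := fun x => g' x + ε)
      (by simpa using ha) (hg.add (by fun_prop)) (fun x hx => ?_) (fun x hx hfx => ?_) ht
    · simpa using (hg' x hx).fun_add (((hasDerivWithinAt_id x _).sub_const a).const_mul ε)
    · have hgf : g x ≤ f x := by nlinarith [hx.1]
      linarith [hf_sub x hx, hF x hx hgf, hg_super x hx]
  refine le_of_forall_pos_le_add fun δ hδ => ?_
  have hta : 0 ≤ t - a := sub_nonneg.2 ht.1
  calc f t ≤ g t + δ / (t - a + 1) * (t - a) := below_lift _ (by positivity)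
    _ ≤ g t + δ := by
      gcongr
      rw [div_mul_eq_mul_div, div_le_iff₀ (by positivity)]
      nlinarith

theorem image_le_of_cascade_stage {α h₁ h₂ f f' g g' : ℝ → ℝ} {a b : ℝ} (hα : Monotone α)
    (hf : ContinuousOn f (Icc a b)) (hf' : ∀ t ∈ Ico a b, HasDerivWithinAt f (f' t) (Ici t) t)
    (hg : ContinuousOn g (Icc a b)) (hg' : ∀ t ∈ Ico a b, HasDerivWithinAt g (g' t) (Ici t) t)
    (hf_sub : ∀ t ∈ Ico a b, f' t ≤ -α (f t) + h₁ t)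
    (hg_super : ∀ t ∈ Ico a b, -α (g t) + h₂ t ≤ g' t) (hh : ∀ t ∈ Ico a b, h₁ t ≤ h₂ t)
    (ha : f a ≤ g a) : ∀ t ∈ Icc a b, f t ≤ g t :=
  image_le_of_sub_super_solution_of_antitone (F := fun t x => -α x + h₂ t)
    (fun _ _ _ _ hxy => add_le_add_left (neg_le_neg (hα hxy)) _) hf hf' hg hg'
    (fun t ht => (hf_sub t ht).trans (by simpa using hh t ht)) hg_super ha

theorem cascade_comparison_general {r : ℕ} (t₀ : ℝ)
    (α : ℕ → ℝ → ℝ)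
    (hα : ∀ k, 1 ≤ k → k ≤ r →
      ContDiff ℝ 1 (α k) ∧ StrictMono (α k) ∧ α k 0 = 0)
    (q : ℝ → ℝ)
    (p : ℝ → (Fin r → ℝ) → (Fin r → ℝ))
    (hp : ∀ t, ∀ v : Fin r → ℝ, ∀ i : Fin r, p t v i =
      -α (i.val + 1) (v i) + (if hi : i.val + 1 < r then v ⟨i.val + 1, hi⟩ else q t))
    (v₀ : Fin r → ℝ)
    -- ψ solves ψ̇ = p(t, ψ), ψ(t₀) = v₀
    (ψ : ℝ → Fin r → ℝ) (hψ0 : ψ t₀ = v₀)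
    (hψ : ∀ t ∈ Set.Ici t₀, HasDerivAt ψ (p t (ψ t)) t)
    -- m is continuously differentiable with ṁ(t) ⪯ p(t, m(t)) and m(t₀) ⪯ v₀
    (m m' : ℝ → Fin r → ℝ)
    (hm : ∀ t ∈ Set.Ici t₀, HasDerivAt m (m' t) t)
    (hcomp : ∀ t ∈ Set.Ici t₀, ∀ i, m' t i ≤ p t (m t) i)
    (hm0 : ∀ i, m t₀ i ≤ v₀ i) :
    ∀ t ∈ Set.Ici t₀, ∀ i, m t i ≤ ψ t i := by
  intro T hT i
  have hIcc : Icc t₀ T ⊆ Ici t₀ := Icc_subset_Ici_self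
  have component {u u' : ℝ → Fin r → ℝ} (hu : ∀ t ∈ Ici t₀, HasDerivAt u (u' t) t) (j : Fin r) :
      ContinuousOn (fun s => u s j) (Icc t₀ T) ∧
        ∀ t ∈ Ico t₀ T, HasDerivWithinAt (fun s => u s j) (u' t j) (Ici t) t :=
    ⟨fun t ht => (hasDerivAt_pi.1 (hu t (hIcc ht)) j).continuousAt.continuousWithinAt,
      fun t ht => (hasDerivAt_pi.1 (hu t (hIcc (Ico_subset_Icc_self ht))) j).hasDerivWithinAt⟩
  suffices ∀ t ∈ Icc t₀ T, m t i ≤ ψ t i from this T ⟨hT, le_rfl⟩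
  induction i using WellFoundedGT.induction with
  | _ i ih =>
    obtain ⟨hm_cont, hm_deriv⟩ := component hm i
    obtain ⟨hψ_cont, hψ_deriv⟩ := component hψ i
    refine image_le_of_cascade_stage (hα (i + 1) (by omega) i.isLt).2.1.monotone
      hm_cont hm_deriv hψ_cont hψ_deriv
      (fun t ht => (hcomp t (hIcc (Ico_subset_Icc_self ht)) i).trans_eq (hp t (m t) i))
      (fun t _ => (hp t (ψ t) i).ge) (fun t ht => ?_) (by rw [hψ0]; exact hm0 i)
    split_ifs with hi
    · exact ih _ (Fin.lt_def.2 (Nat.lt_succ_self _)) t (Ico_subset_Icc_self ht)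
    · exact le_rfl

/-- comparison principle for the cascade system (Proposition 2):
any C¹ function `m` with `ṁ(t) ⪯ p(t, m(t))` and `m(t₀) ⪯ v₀` stays below the
solution `ψ` of `ψ̇ = p(t, ψ)`, `ψ(t₀) = v₀`. -/
theorem cascade_comparison {r : ℕ} (hr : 1 ≤ r) (t₀ : ℝ)
    (α : ℕ → ℝ → ℝ)
    (hα : ∀ k, 1 ≤ k → k ≤ r →
      ContDiff ℝ 1 (α k) ∧ StrictMono (α k) ∧ α k 0 = 0)
    (q : ℝ → ℝ) (hq : ContinuousOn q (Set.Ici t₀))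
    (p : ℝ → (Fin r → ℝ) → (Fin r → ℝ))
    (hp : ∀ t, ∀ v : Fin r → ℝ, ∀ i : Fin r, p t v i =
      -α (i.val + 1) (v i) + (if hi : i.val + 1 < r then v ⟨i.val + 1, hi⟩ else q t))
    (v₀ : Fin r → ℝ)
    -- ψ solves ψ̇ = p(t, ψ), ψ(t₀) = v₀
    (ψ : ℝ → Fin r → ℝ) (hψ0 : ψ t₀ = v₀)
    (hψ : ∀ t ∈ Set.Ici t₀, HasDerivAt ψ (p t (ψ t)) t)
    -- m is continuously differentiable with ṁ(t) ⪯ p(t, m(t)) and m(t₀) ⪯ v₀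
    (m m' : ℝ → Fin r → ℝ)
    (hm : ∀ t ∈ Set.Ici t₀, HasDerivAt m (m' t) t)
    (hm'c : ContinuousOn m' (Set.Ici t₀))
    (hcomp : ∀ t ∈ Set.Ici t₀, ∀ i, m' t i ≤ p t (m t) i)
    (hm0 : ∀ i, m t₀ i ≤ v₀ i) :
    ∀ t ∈ Set.Ici t₀, ∀ i, m t i ≤ ψ t i :=
  cascade_comparison_general t₀ α hα q p hp v₀ ψ hψ0 hψ m m' hm hcomp hm0
end

section
/- Let α₁, …, α_r be continuously differentiable extended class 𝒦 functions and consider the cascade system on ℝ^r: ṁ_{k-1} = −α_k(m_{k-1}) + m_k for 1 ≤ k ≤ r − 1 and ṁ_{r-1} = −α_r(m_{r-1}), with state m = (m₀, …, m_{r-1}). Then the origin is globally asymptotically stable: (i) every solution m : [t₀, ∞) → ℝ^r satisfies m(t) → 0 as t → ∞, and (ii) for every ε > 0 there exists δ > 0 such that every solution m : [t₀, ∞) → ℝ^r with ‖m(t₀)‖ ≤ δ satisfies ‖m(t)‖ ≤ ε for all t ≥ t₀. -/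
/-!
Each coordinate obeys a scalar equation `ẋ = -a(x) + u` with `a` increasing and `a 0 = 0`, whose
input `u` is the next coordinate (zero for the last one). For such an equation `[-M, M]` is
invariant while `|u| ≤ min (a M) (-a (-M))`, and `x → 0` when `u → 0`, since above any `ε > 0`
the drift is eventually below `-a(ε)/2`. Both facts propagate from the last coordinate to the first.
-/

open Set Filter Topology

lemma le_of_hasDerivAt_nonpos_of_le {f f' : ℝ → ℝ} {t₀ M : ℝ}
    (hf : ∀ t ∈ Ici t₀, HasDerivAt f (f' t) t) (h₀ : f t₀ ≤ M)
    (hf' : ∀ t ∈ Ici t₀, M ≤ f t → f' t ≤ 0) : ∀ t ∈ Ici t₀, f t ≤ M := by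
  intro t ht
  have hlen : 0 < t - t₀ + 1 := by linarith [mem_Ici.1 ht]
  refine le_of_forall_pos_le_add fun η hη => ?_
  set s := η / (t - t₀ + 1)
  have hs : 0 < s := div_pos hη hlen
  -- the fencing lemma needs a strict inequality at the barrier, hence a small positive slope
  have hfence := image_le_of_deriv_right_lt_deriv_boundary (a := t₀) (b := t)
    (B := fun τ => M + s * (τ - t₀ + 1)) (B' := fun _ => s)
    (fun τ hτ => (hf τ hτ.1).continuousAt.continuousWithinAt)
    (fun τ hτ => (hf τ hτ.1).hasDerivWithinAt) (by simpa using h₀.trans (by linarith))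
    (fun τ => by
      simpa using ((((hasDerivAt_id τ).sub_const t₀).add_const 1).const_mul s).const_add M)
    (fun τ hτ hfB => (hf' τ hτ.1 (by rw [hfB]; nlinarith [hτ.1])).trans_lt hs) ⟨ht, le_rfl⟩
  calc f t ≤ M + s * (t - t₀ + 1) := hfence
    _ = M + η := by rw [div_mul_cancel₀ η hlen.ne']

lemma eventually_le_of_hasDerivAt_le_neg {f f' : ℝ → ℝ} {T ε c : ℝ} (hc : 0 < c)
    (hf : ∀ t ∈ Ici T, HasDerivAt f (f' t) t) (hf' : ∀ t ∈ Ici T, ε ≤ f t → f' t ≤ -c) :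
    ∀ᶠ t in atTop, f t ≤ ε := by
  obtain ⟨t₁, ht₁, hft₁⟩ : ∃ t₁ ∈ Ici T, f t₁ ≤ ε := by
    by_contra! hgt
    set t₁ := T + (f T - ε) / c + 1
    have hTt₁ : T ≤ t₁ := by
      have : 0 ≤ (f T - ε) / c := div_nonneg (by linarith [hgt T self_mem_Ici]) hc.le
      linarith
    have hdecay : f t₁ ≤ f T - c * (t₁ - T) :=
      image_le_of_deriv_right_le_deriv_boundary
        (B := fun τ => f T - c * (τ - T)) (B' := fun _ => -c)
        (fun τ hτ => (hf τ hτ.1).continuousAt.continuousWithinAt)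
        (fun τ hτ => (hf τ hτ.1).hasDerivWithinAt) (by simp) (by fun_prop)
        (fun τ _ => by
          simpa using ((((hasDerivAt_id τ).sub_const T).const_mul c).const_sub (f T)).hasDerivWithinAt)
        (fun τ hτ => hf' τ hτ.1 (hgt τ hτ.1).le) ⟨hTt₁, le_rfl⟩
    have : c * (t₁ - T) = f T - ε + c := by
      simp only [t₁]; field_simp; ring
    linarith [hgt t₁ hTt₁]
  filter_upwards [eventually_ge_atTop t₁] with t ht
  have hsub : Ici t₁ ⊆ Ici T := Ici_subset_Ici.2 ht₁
  exact le_of_hasDerivAt_nonpos_of_le (fun s hs => hf s (hsub hs)) hft₁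
    (fun s hs hεs => (hf' s (hsub hs) hεs).trans (neg_nonpos.2 hc.le)) t ht

section ScalarFeedback

variable {a x u : ℝ → ℝ} {t₀ : ℝ}

lemma le_of_hasDerivAt_neg_add (ha : Monotone a) {M : ℝ}
    (hx : ∀ t ∈ Ici t₀, HasDerivAt x (-a (x t) + u t) t)
    (hu : ∀ t ∈ Ici t₀, u t ≤ a M) (h₀ : x t₀ ≤ M) : ∀ t ∈ Ici t₀, x t ≤ M :=
  le_of_hasDerivAt_nonpos_of_le hx h₀ fun t ht hM => by linarith [ha hM, hu t ht]

lemma eventually_le_of_hasDerivAt_neg_add (ha : StrictMono a) (ha₀ : a 0 = 0)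
    (hx : ∀ t ∈ Ici t₀, HasDerivAt x (-a (x t) + u t) t) (hu : Tendsto u atTop (𝓝 0))
    {ε : ℝ} (hε : 0 < ε) : ∀ᶠ t in atTop, x t ≤ ε := by
  have hc : 0 < a ε / 2 := by linarith [ha₀ ▸ ha hε]
  obtain ⟨T, hT⟩ := eventually_atTop.1
    ((hu.eventually (gt_mem_nhds hc)).and (eventually_ge_atTop t₀))
  exact eventually_le_of_hasDerivAt_le_neg hc (fun t ht => hx t (hT t ht).2)
    fun t ht hεx => by linarith [ha.monotone hεx, (hT t ht).1]

-- Reflection `x ↦ -x` turns lower bounds into upper bounds.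
lemma hasDerivAt_neg_neg_add (hx : ∀ t ∈ Ici t₀, HasDerivAt x (-a (x t) + u t) t) :
    ∀ t ∈ Ici t₀, HasDerivAt (-x) (-(fun y => -a (-y)) ((-x) t) + (-u) t) t :=
  fun t ht => by simpa [neg_add, add_comm] using (hx t ht).neg

lemma abs_le_of_hasDerivAt_neg_add (ha : Monotone a) {M : ℝ}
    (hx : ∀ t ∈ Ici t₀, HasDerivAt x (-a (x t) + u t) t)
    (hu : ∀ t ∈ Ici t₀, |u t| ≤ min (a M) (-a (-M))) (h₀ : |x t₀| ≤ M) :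
    ∀ t ∈ Ici t₀, |x t| ≤ M := by
  have hupper := le_of_hasDerivAt_neg_add ha hx
    (fun t ht => (le_abs_self _).trans ((hu t ht).trans (min_le_left _ _))) (abs_le.1 h₀).2
  have hlower := le_of_hasDerivAt_neg_add (a := fun y => -a (-y)) (M := M)
    (fun y z h => neg_le_neg (ha (neg_le_neg h))) (hasDerivAt_neg_neg_add hx)
    (fun t ht => (neg_le_abs _).trans ((hu t ht).trans (min_le_right _ _)))
    (neg_le.1 (abs_le.1 h₀).1)
  exact fun t ht => abs_le.2 ⟨by simpa using neg_le_neg (hlower t ht), hupper t ht⟩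

lemma tendsto_zero_of_hasDerivAt_neg_add (ha : StrictMono a) (ha₀ : a 0 = 0)
    (hx : ∀ t ∈ Ici t₀, HasDerivAt x (-a (x t) + u t) t) (hu : Tendsto u atTop (𝓝 0)) :
    Tendsto x atTop (𝓝 0) := by
  refine tendsto_order.2 ⟨fun b hb => ?_, fun b hb => ?_⟩
  · have := eventually_le_of_hasDerivAt_neg_add (a := fun y => -a (-y))
      (fun y z h => neg_lt_neg (ha (neg_lt_neg h))) (by simp [ha₀])
      (hasDerivAt_neg_neg_add hx) (neg_zero (G := ℝ) ▸ hu.neg) (by linarith : 0 < -(b / 2))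
    filter_upwards [this] with t ht
    linarith [show -x t ≤ -(b / 2) from ht]
  · filter_upwards [eventually_le_of_hasDerivAt_neg_add ha ha₀ hx hu (half_pos hb)] with t ht
    linarith

end ScalarFeedback

-- The last equation of the cascade has no input: this is encoded by padding with `x r = 0`.
def IsCascadeSolution (α : ℕ → ℝ → ℝ) (r : ℕ) (t₀ : ℝ) (x : ℕ → ℝ → ℝ) : Prop :=
  (∀ k < r, ∀ t ∈ Ici t₀, HasDerivAt (x k) (-α (k + 1) (x k t) + x (k + 1) t) t) ∧ x r = 0

namespace IsCascadeSolution

variable {α : ℕ → ℝ → ℝ} {r : ℕ} {t₀ : ℝ}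

lemma tendsto_zero (hα : ∀ k < r, StrictMono (α (k + 1)) ∧ α (k + 1) 0 = 0)
    {x : ℕ → ℝ → ℝ} (hx : IsCascadeSolution α r t₀ x) {k : ℕ} (hk : k ≤ r) :
    Tendsto (x k) atTop (𝓝 0) := by
  induction hk using Nat.decreasingInduction with
  | self => rw [hx.2]; exact tendsto_const_nhds
  | of_succ k hk ih =>
    exact tendsto_zero_of_hasDerivAt_neg_add (hα k hk).1 (hα k hk).2 (hx.1 k hk) ih

lemma exists_forall_abs_le (hα : ∀ k < r, StrictMono (α (k + 1)) ∧ α (k + 1) 0 = 0)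
    {k : ℕ} (hk : k ≤ r) {ε : ℝ} (hε : 0 < ε) :
    ∃ δ > 0, ∀ x, IsCascadeSolution α r t₀ x → (∀ j, |x j t₀| ≤ δ) →
      ∀ j, k ≤ j → j ≤ r → ∀ t ∈ Ici t₀, |x j t| ≤ ε := by
  induction hk using Nat.decreasingInduction generalizing ε with
  | self =>
    refine ⟨1, one_pos, fun x hx _ j hrj hjr t _ => ?_⟩
    rw [le_antisymm hjr hrj, hx.2]
    simpa using hε.le
  | of_succ k hk ih =>
    obtain ⟨hmono, hzero⟩ := hα k hk
    -- an input bounded by `η` keeps coordinate `k` in `[-ε, ε]`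
    set η := min ε (min (α (k + 1) ε) (-α (k + 1) (-ε)))
    have hη : 0 < η := lt_min hε (lt_min (hzero ▸ hmono hε)
      (neg_pos.2 (hzero ▸ hmono (neg_lt_zero.2 hε))))
    obtain ⟨δ, hδ, hδx⟩ := ih hη
    refine ⟨min δ ε, lt_min hδ hε, fun x hx hx₀ j hkj hjr t ht => ?_⟩
    have htail := hδx x hx fun i => (hx₀ i).trans (min_le_left _ _)
    rcases hkj.eq_or_lt with rfl | hkj
    · exact abs_le_of_hasDerivAt_neg_add hmono.monotone (hx.1 k hk)
        (fun s hs => (htail (k + 1) le_rfl hk s hs).trans (min_le_right _ _))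
        ((hx₀ k).trans (min_le_right _ _)) t ht
    · exact (htail j hkj hjr t ht).trans (min_le_left _ _)

end IsCascadeSolution

def paddedCoord {r : ℕ} (m : ℝ → EuclideanSpace ℝ (Fin r)) (k : ℕ) (t : ℝ) : ℝ :=
  if hk : k < r then m t ⟨k, hk⟩ else 0

lemma paddedCoord_val {r : ℕ} (m : ℝ → EuclideanSpace ℝ (Fin r)) (i : Fin r) (t : ℝ) :
    paddedCoord m i t = m t i := by
  simp [paddedCoord]

lemma abs_paddedCoord_le_norm {r : ℕ} (m : ℝ → EuclideanSpace ℝ (Fin r)) (k : ℕ) (t : ℝ) :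
    |paddedCoord m k t| ≤ ‖m t‖ := by
  unfold paddedCoord
  split_ifs
  · exact PiLp.norm_apply_le (m t) _
  · simp

lemma EuclideanSpace.norm_le_sum_abs {ι : Type*} [Fintype ι] (v : EuclideanSpace ℝ ι) :
    ‖v‖ ≤ ∑ i, |v i| := by
  rw [EuclideanSpace.norm_eq, Real.sqrt_le_left (Finset.sum_nonneg fun i _ => abs_nonneg _)]
  simpa using Finset.sum_sq_le_sq_sum_of_nonneg fun i _ => abs_nonneg (v i)

lemma isCascadeSolution_paddedCoord {r : ℕ} {t₀ : ℝ} {α : ℕ → ℝ → ℝ}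
    {F : EuclideanSpace ℝ (Fin r) → EuclideanSpace ℝ (Fin r)}
    (hF : ∀ (v : EuclideanSpace ℝ (Fin r)) (i : Fin r),
      F v i = -α (i.val + 1) (v i) +
        (if hi : i.val + 1 < r then v ⟨i.val + 1, hi⟩ else 0))
    {m : ℝ → EuclideanSpace ℝ (Fin r)} (hm : ∀ t ∈ Ici t₀, HasDerivAt m (F (m t)) t) :
    IsCascadeSolution α r t₀ (paddedCoord m) := by
  refine ⟨fun k hk t ht => ?_, funext fun t => by simp [paddedCoord]⟩
  rw [show paddedCoord m k = fun s => m s ⟨k, hk⟩ from funext fun s => dif_pos hk]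
  refine ((PiLp.hasFDerivAt_apply (𝕜 := ℝ) 2 (m t) ⟨k, hk⟩).comp_hasDerivAt t
    (hm t ht)).congr_deriv ?_
  simp [hF, paddedCoord]

/-- Claim 1: the origin of the auxiliary cascade system
`ṁ_{k−1} = −α_k(m_{k−1}) + m_k` (1 ≤ k ≤ r−1), `ṁ_{r−1} = −α_r(m_{r−1})`
is globally asymptotically stable: global attractivity and Lyapunov
stability. -/
theorem cascade_origin_GAS {r : ℕ} (hr : 1 ≤ r) (t₀ : ℝ)
    (α : ℕ → ℝ → ℝ)
    (hα : ∀ k, 1 ≤ k → k ≤ r →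
      ContDiff ℝ 1 (α k) ∧ StrictMono (α k) ∧ α k 0 = 0)
    (F : EuclideanSpace ℝ (Fin r) → EuclideanSpace ℝ (Fin r))
    (hF : ∀ (v : EuclideanSpace ℝ (Fin r)) (i : Fin r),
      F v i = -α (i.val + 1) (v i) +
        (if hi : i.val + 1 < r then v ⟨i.val + 1, hi⟩ else 0)) :
    -- (i) every solution converges to the origin
    (∀ m : ℝ → EuclideanSpace ℝ (Fin r),
      (∀ t ∈ Set.Ici t₀, HasDerivAt m (F (m t)) t) →
      Filter.Tendsto m Filter.atTop (nhds 0)) ∧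
    -- (ii) Lyapunov stability
    (∀ ε > (0 : ℝ), ∃ δ > (0 : ℝ), ∀ m : ℝ → EuclideanSpace ℝ (Fin r),
      (∀ t ∈ Set.Ici t₀, HasDerivAt m (F (m t)) t) →
      ‖m t₀‖ ≤ δ → ∀ t ∈ Set.Ici t₀, ‖m t‖ ≤ ε) := by
  have hα' : ∀ k < r, StrictMono (α (k + 1)) ∧ α (k + 1) 0 = 0 :=
    fun k hk => (hα (k + 1) k.succ_pos hk).2
  refine ⟨fun m hm => ?_, fun ε hε => ?_⟩
  · have hsol := isCascadeSolution_paddedCoord (α := α) hF hm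
    have hcoord (i : Fin r) : Tendsto (fun t => |m t i|) atTop (𝓝 0) := by
      simpa [paddedCoord_val] using (hsol.tendsto_zero hα' i.isLt.le).abs
    exact squeeze_zero_norm (fun t => EuclideanSpace.norm_le_sum_abs (m t))
      (by simpa using tendsto_finsetSum Finset.univ fun i _ => hcoord i)
  · have hr' : (0 : ℝ) < r := Nat.cast_pos.2 hr
    obtain ⟨δ, hδ, hstable⟩ :=
      IsCascadeSolution.exists_forall_abs_le (t₀ := t₀) hα' r.zero_le (div_pos hε hr')
    refine ⟨δ, hδ, fun m hm hm₀ t ht => ?_⟩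
    have hcoord (i : Fin r) : |m t i| ≤ ε / r := by
      simpa [paddedCoord_val] using hstable _ (isCascadeSolution_paddedCoord hF hm)
        (fun j => (abs_paddedCoord_le_norm m j t₀).trans hm₀) i i.val.zero_le i.isLt.le t ht
    calc ‖m t‖ ≤ ∑ i, |m t i| := EuclideanSpace.norm_le_sum_abs (m t)
      _ ≤ ∑ _i : Fin r, ε / r := Finset.sum_le_sum fun i _ => hcoord i
      _ = ε := by
        simp only [Finset.sum_const, Finset.card_univ, Fintype.card_fin, nsmul_eq_mul]
        field_simp
end

section
/- Let α be an extended class 𝒦 function and let m : [t₀, ∞) → ℝ be a solution of ṁ(t) = −α(m(t)). Then |m(t)| is nonincreasing in t and m(t) → 0 as t → ∞. -/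
/-!
Along a solution, `d/dt m² = -2 m α(m) ≤ 0` because `α` has the sign of its argument, so `|m|` is
nonincreasing. If `|m|` stayed above some `ε > 0`, then `m α(m)` would stay above a constant `c > 0`
(monotonicity of `α` away from `0`), forcing `m(t)² ≤ m(t₀)² - 2c (t - t₀)`, which is eventually
negative.
-/

open Set

lemma Monotone.mul_map_nonneg {α : ℝ → ℝ} (hα : Monotone α) (hα0 : α 0 = 0) (x : ℝ) :
    0 ≤ x * α x := by
  rcases le_total 0 x with hx | hx
  · exact mul_nonneg hx (hα0 ▸ hα hx)
  · exact mul_nonneg_of_nonpos_of_nonpos hx (hα0 ▸ hα hx)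

lemma StrictMono.exists_pos_le_mul_map {α : ℝ → ℝ} (hα : StrictMono α) (hα0 : α 0 = 0)
    {ε : ℝ} (hε : 0 < ε) : ∃ c > 0, ∀ x, ε ≤ |x| → c ≤ x * α x := by
  have hpos : 0 < α ε := hα0 ▸ hα hε
  have hneg : α (-ε) < 0 := hα0 ▸ hα (neg_lt_zero.mpr hε)
  have hmin : 0 < min (α ε) (-α (-ε)) := lt_min hpos (neg_pos.mpr hneg)
  refine ⟨ε * min (α ε) (-α (-ε)), mul_pos hε hmin, fun x hx => ?_⟩
  rcases le_abs'.mp hx with hx | hx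
  · have hαx : α x ≤ α (-ε) := hα.monotone hx
    calc ε * min (α ε) (-α (-ε)) ≤ -x * -α x :=
          mul_le_mul (by linarith) ((min_le_right _ _).trans (by linarith)) hmin.le (by linarith)
      _ = x * α x := neg_mul_neg x (α x)
  · exact mul_le_mul hx ((min_le_left _ _).trans (hα.monotone hx)) hmin.le (by linarith)

lemma sub_le_mul_sub_of_hasDerivAt_le {f f' : ℝ → ℝ} {t₀ C : ℝ}
    (hf : ∀ t ∈ Ici t₀, HasDerivAt f (f' t) t) (hf' : ∀ t ∈ Ici t₀, f' t ≤ C)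
    {s t : ℝ} (hs : s ∈ Ici t₀) (hst : s ≤ t) : f t - f s ≤ C * (t - s) := by
  refine (convex_Ici t₀).image_sub_le_mul_sub_of_deriv_le
    (fun t ht => (hf t ht).continuousAt.continuousWithinAt) ?_ ?_ s hs t (le_trans hs hst) hst
  all_goals rw [interior_Ici]
  · exact fun t ht => (hf t (Ioi_subset_Ici_self ht)).differentiableAt.differentiableWithinAt
  · exact fun t ht => (hf t (Ioi_subset_Ici_self ht)).deriv ▸ hf' t (Ioi_subset_Ici_self ht)

section ScalarODE

variable {α m : ℝ → ℝ} {t₀ : ℝ}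

lemma sq_sub_sq_le_of_hasDerivAt (hm : ∀ t ∈ Ici t₀, HasDerivAt m (-α (m t)) t) {c : ℝ}
    (hc : ∀ t ∈ Ici t₀, c ≤ m t * α (m t)) {s t : ℝ} (hs : s ∈ Ici t₀) (hst : s ≤ t) :
    m t ^ 2 - m s ^ 2 ≤ -(2 * c) * (t - s) := by
  refine sub_le_mul_sub_of_hasDerivAt_le (f := fun t => m t ^ 2)
    (f' := fun t => -(2 * (m t * α (m t)))) (fun t ht => ?_) (fun t ht => ?_) hs hst
  · exact ((hm t ht).pow 2).congr_deriv (by push_cast; ring)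
  · linarith [hc t ht]

lemma abs_antitoneOn_of_hasDerivAt (hα : Monotone α) (hα0 : α 0 = 0)
    (hm : ∀ t ∈ Ici t₀, HasDerivAt m (-α (m t)) t) : AntitoneOn (fun t => |m t|) (Ici t₀) := by
  intro s hs t _ hst
  have := sq_sub_sq_le_of_hasDerivAt hm (fun t _ => hα.mul_map_nonneg hα0 (m t)) hs hst
  exact sq_le_sq.mp (by linarith)

lemma exists_abs_lt_of_hasDerivAt (hα : StrictMono α) (hα0 : α 0 = 0)
    (hm : ∀ t ∈ Ici t₀, HasDerivAt m (-α (m t)) t) {ε : ℝ} (hε : 0 < ε) :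
    ∃ T ∈ Ici t₀, |m T| < ε := by
  by_contra! hlarge
  obtain ⟨c, hc, hcm⟩ := hα.exists_pos_le_mul_map hα0 hε
  -- the time at which the bound `m t₀² - 2c (t - t₀)` on `m t²` drops to `-m t₀²`
  set t := t₀ + m t₀ ^ 2 / c
  have ht : t₀ ≤ t := le_add_of_nonneg_right (by positivity)
  have hdecay := sq_sub_sq_le_of_hasDerivAt hm (fun t ht => hcm _ (hlarge t ht)) self_mem_Ici ht
  have hsq : 0 < m t ^ 2 := sq_abs (m t) ▸ pow_pos (hε.trans_le (hlarge t ht)) 2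
  have hdrop : -(2 * c) * (t - t₀) = -(2 * m t₀ ^ 2) := by
    simp only [t, add_sub_cancel_left]
    field_simp
  linarith [sq_nonneg (m t₀)]

end ScalarODE

theorem scalar_classK_decay_general (t₀ : ℝ) (α : ℝ → ℝ)
    (hα_mono : StrictMono α) (hα0 : α 0 = 0)
    (m : ℝ → ℝ)
    (hm : ∀ t ∈ Set.Ici t₀, HasDerivAt m (-α (m t)) t) :
    (∀ s ∈ Set.Ici t₀, ∀ t, s ≤ t → |m t| ≤ |m s|) ∧
    Filter.Tendsto m Filter.atTop (nhds 0) := by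
  have hanti : ∀ s ∈ Ici t₀, ∀ t, s ≤ t → |m t| ≤ |m s| :=
    fun s hs t hst => abs_antitoneOn_of_hasDerivAt hα_mono.monotone hα0 hm hs (hs.trans hst) hst
  refine ⟨hanti, Metric.tendsto_atTop.mpr fun ε hε => ?_⟩
  obtain ⟨T, hT, hTε⟩ := exists_abs_lt_of_hasDerivAt hα_mono hα0 hm hε
  exact ⟨T, fun t ht => by simpa only [Real.dist_eq, sub_zero] using (hanti T hT t ht).trans_lt hTε⟩

/-- for the scalar system `ṁ = −α(m)` with `α` an extended class
𝒦 function, `|m(t)|` is nonincreasing and `m(t) → 0` as `t → ∞`. -/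
theorem scalar_classK_decay (t₀ : ℝ) (α : ℝ → ℝ)
    (hα_cont : Continuous α) (hα_mono : StrictMono α) (hα0 : α 0 = 0)
    (m : ℝ → ℝ)
    (hm : ∀ t ∈ Set.Ici t₀, HasDerivAt m (-α (m t)) t) :
    (∀ s ∈ Set.Ici t₀, ∀ t, s ≤ t → |m t| ≤ |m s|) ∧
    Filter.Tendsto m Filter.atTop (nhds 0) :=
  scalar_classK_decay_general t₀ α hα_mono hα0 m hm
end

section
/- Let α₁, …, α_r be continuously differentiable extended class 𝒦 functions, q : [t₀, ∞) → ℝ continuous with q(t) ≥ 0 for all t, and p the associated cascade vector field as in the context. Then the nonnegative orthant ℝ^r_+ = {v ∈ ℝ^r : v_i ≥ 0 for all i} is forward invariant for ψ̇ = p(t, ψ): every solution ψ defined on an interval [t₀, T) with ψ(t₀) ⪰ 0 satisfies ψ(t) ⪰ 0 for all t ∈ [t₀, T). -/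
/-!
Each component of the cascade obeys a scalar equation `ẋ = -α(x) + u` whose input `u` is the
next component, or `q` for the last one. When `x < 0`, monotonicity of `α` and `α 0 = 0` give
`-α(x) ≥ 0`, so a nonnegative input keeps `x` from crossing zero. Hence the orthant is invariant,
by downward induction on the component index starting from the last component, driven by `q ≥ 0`.
-/

open Set

theorem image_nonneg_of_deriv_right_nonneg_of_neg {x x' : ℝ → ℝ} {a b : ℝ}
    (hx : ContinuousOn x (Icc a b)) (hx' : ∀ t ∈ Ico a b, HasDerivWithinAt x (x' t) (Ici t) t)
    (ha : 0 ≤ x a) (bound : ∀ t ∈ Ico a b, x t < 0 → 0 ≤ x' t) :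
    ∀ ⦃t⦄, t ∈ Icc a b → 0 ≤ x t := by
  intro t ht
  -- Fence `-x` from above by the strictly increasing barrier `ε (s - a + 1)` and let `ε → 0`.
  have fenced : ∀ ε > 0, -x t ≤ ε * (t - a + 1) := fun ε hε => by
    refine image_le_of_deriv_right_lt_deriv_boundary (B := fun s => ε * (s - a + 1))
      (B' := fun _ => ε) hx.neg (fun s hs => (hx' s hs).neg) ?_ (fun s => ?_)
      (fun s hs hxs => ?_) ht
    · simp only [Pi.neg_apply, sub_self, zero_add, mul_one]
      linarith
    · simpa using (((hasDerivAt_id s).sub_const a).add_const 1).const_mul ε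
    · have hneg : x s < 0 := by
        rw [Pi.neg_apply] at hxs
        nlinarith [hs.1]
      linarith [bound s hs hneg]
  have hlen : 0 < t - a + 1 := by linarith [ht.1]
  refine neg_nonpos.mp (le_of_forall_pos_le_add fun δ hδ => ?_)
  simpa [div_mul_cancel₀ δ hlen.ne'] using fenced (δ / (t - a + 1)) (div_pos hδ hlen)

theorem nonneg_of_hasDerivAt_neg_comp_add {α x u : ℝ → ℝ} {a b : ℝ}
    (hα : Monotone α) (hα0 : α 0 = 0)
    (hx : ∀ t ∈ Ico a b, HasDerivAt x (-α (x t) + u t) t)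
    (hu : ∀ t ∈ Ico a b, 0 ≤ u t) (ha : 0 ≤ x a) :
    ∀ t ∈ Ico a b, 0 ≤ x t := by
  intro t ht
  have hsub : Icc a t ⊆ Ico a b := fun s hs => ⟨hs.1, hs.2.trans_lt ht.2⟩
  have hsub' : Ico a t ⊆ Ico a b := Ico_subset_Icc_self.trans hsub
  refine image_nonneg_of_deriv_right_nonneg_of_neg
    (fun s hs => (hx s (hsub hs)).continuousAt.continuousWithinAt)
    (fun s hs => (hx s (hsub' hs)).hasDerivWithinAt) ha (fun s hs hxs => ?_)
    (right_mem_Icc.mpr ht.1)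
  have hαx : α (x s) ≤ 0 := hα0 ▸ hα hxs.le
  linarith [hu s (hsub' hs)]

theorem cascade_orthant_forward_invariant_general {r : ℕ} (t₀ : ℝ)
    (α : ℕ → ℝ → ℝ)
    (hα : ∀ k, 1 ≤ k → k ≤ r →
      ContDiff ℝ 1 (α k) ∧ StrictMono (α k) ∧ α k 0 = 0)
    (q : ℝ → ℝ)
    (hq_nonneg : ∀ t ∈ Set.Ici t₀, 0 ≤ q t)
    (p : ℝ → (Fin r → ℝ) → (Fin r → ℝ))
    (hp : ∀ t, ∀ v : Fin r → ℝ, ∀ i : Fin r, p t v i =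
      -α (i.val + 1) (v i) + (if hi : i.val + 1 < r then v ⟨i.val + 1, hi⟩ else q t))
    (T : ℝ) (ψ : ℝ → Fin r → ℝ)
    (hψ : ∀ t ∈ Set.Ico t₀ T, HasDerivAt ψ (p t (ψ t)) t)
    (hψ0 : ∀ i, 0 ≤ ψ t₀ i) :
    ∀ t ∈ Set.Ico t₀ T, ∀ i, 0 ≤ ψ t i := by
  have hcomp : ∀ i : Fin r, ∀ t ∈ Ico t₀ T, HasDerivAt (fun s => ψ s i)
      (-α (i.val + 1) (ψ t i)
        + (if hi : i.val + 1 < r then ψ t ⟨i.val + 1, hi⟩ else q t)) t :=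
    fun i t ht => hp t (ψ t) i ▸ hasDerivAt_pi.mp (hψ t ht) i
  suffices ∀ i, ∀ t ∈ Ico t₀ T, 0 ≤ ψ t i from fun t ht i => this i t ht
  intro i
  induction i using WellFoundedGT.induction with
  | _ i ih =>
    obtain ⟨-, hmono, hzero⟩ := hα (i.val + 1) (by omega) i.isLt
    refine nonneg_of_hasDerivAt_neg_comp_add hmono.monotone hzero (hcomp i) (fun s hs => ?_)
      (hψ0 i)
    split_ifs with hi
    · exact ih ⟨i.val + 1, hi⟩ (Fin.lt_def.mpr (Nat.lt_succ_self _)) s hs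
    · exact hq_nonneg s hs.1

/-- the nonnegative orthant is forward invariant for the cascade
system `ψ̇ = p(t, ψ)` when the forcing term `q` is nonnegative. -/
theorem cascade_orthant_forward_invariant {r : ℕ} (hr : 1 ≤ r) (t₀ : ℝ)
    (α : ℕ → ℝ → ℝ)
    (hα : ∀ k, 1 ≤ k → k ≤ r →
      ContDiff ℝ 1 (α k) ∧ StrictMono (α k) ∧ α k 0 = 0)
    (q : ℝ → ℝ) (hq_cont : ContinuousOn q (Set.Ici t₀))
    (hq_nonneg : ∀ t ∈ Set.Ici t₀, 0 ≤ q t)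
    (p : ℝ → (Fin r → ℝ) → (Fin r → ℝ))
    (hp : ∀ t, ∀ v : Fin r → ℝ, ∀ i : Fin r, p t v i =
      -α (i.val + 1) (v i) + (if hi : i.val + 1 < r then v ⟨i.val + 1, hi⟩ else q t))
    (T : ℝ) (ψ : ℝ → Fin r → ℝ)
    (hψ : ∀ t ∈ Set.Ico t₀ T, HasDerivAt ψ (p t (ψ t)) t)
    (hψ0 : ∀ i, 0 ≤ ψ t₀ i) :
    ∀ t ∈ Set.Ico t₀ T, ∀ i, 0 ≤ ψ t i :=
  cascade_orthant_forward_invariant_general t₀ α hα q hq_nonneg p hp T ψ hψ hψ0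
end

section
/- Let α₁, …, α_r be continuously differentiable extended class 𝒦 functions. Then the nonnegative orthant ℝ^r_+ is uniformly stable for the cascade system: for every ε > 0 there exists δ > 0 such that for every continuous q : [t₀, ∞) → ℝ with q(t) ≥ 0 for all t, and every solution ψ : [t₀, ∞) → ℝ^r of ψ̇ = p(t, ψ) (with p the associated cascade vector field) satisfying dist(ψ(t₀), ℝ^r_+) ≤ δ, it holds that dist(ψ(t), ℝ^r_+) ≤ ε for all t ≥ t₀. -/
/-!
Bound each coordinate from below separately. Coordinate `k` obeys `ψₖ' = -αₖ₊₁(ψₖ) + uₖ`, where the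
input `uₖ` is `ψₖ₊₁` or, for the last coordinate, `q ≥ 0`. If `uₖ ≥ -bₖ₊₁` with `bₖ₊₁ < -αₖ₊₁(-bₖ)`,
then `ψₖ' > 0` whenever `ψₖ = -bₖ`, so `ψₖ` never drops below `-bₖ`. Choosing the thresholds
recursively from `b₀ = ε / (√r + 1)` and taking `δ = b_r`, a downward induction over the coordinates
keeps every coordinate of `ψ` above `-b₀`, so `ψ + b₀ 𝟙` is a point of the orthant at distance
`√r b₀ < ε`.
-/

open Set Metric

section Orthant

variable {ι : Type*} [Fintype ι]

lemma neg_apply_le_infDist_orthant (x : EuclideanSpace ℝ ι) (i : ι) :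
    -x i ≤ infDist x {v : EuclideanSpace ℝ ι | ∀ j, 0 ≤ v j} := by
  refine (le_infDist ⟨0, fun _ => by simp⟩).2 fun w hw => ?_
  calc -x i ≤ w i - x i := by linarith [hw i]
    _ ≤ dist (x i) (w i) := by rw [Real.dist_eq, abs_sub_comm]; exact le_abs_self _
    _ ≤ dist x w := PiLp.dist_apply_le x w i

lemma infDist_orthant_le_of_forall_neg_le {x : EuclideanSpace ℝ ι} {c : ℝ} (hc : 0 ≤ c)
    (hx : ∀ i, -c ≤ x i) :
    infDist x {v : EuclideanSpace ℝ ι | ∀ j, 0 ≤ v j} ≤ √(Fintype.card ι) * c := by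
  set e : EuclideanSpace ℝ ι := WithLp.toLp 2 fun _ => c
  have hmem : x + e ∈ {v : EuclideanSpace ℝ ι | ∀ j, 0 ≤ v j} := fun j => by
    simp only [PiLp.add_apply, e]
    linarith [hx j]
  calc infDist x _ ≤ dist x (x + e) := infDist_le_dist_of_mem hmem
    _ = √(Fintype.card ι) * c := by
      rw [dist_self_add_right, EuclideanSpace.norm_eq]
      simp [e, Real.sqrt_mul, Real.sqrt_sq hc]

end Orthant

lemma const_le_image_of_deriv_pos_boundary {x x' : ℝ → ℝ} {t₀ m : ℝ}
    (hx : ∀ t ∈ Ici t₀, HasDerivAt x (x' t) t) (h₀ : m ≤ x t₀)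
    (hm : ∀ t ∈ Ici t₀, x t = m → 0 < x' t) : ∀ t ∈ Ici t₀, m ≤ x t := by
  intro t ht
  have := image_le_of_deriv_right_lt_deriv_boundary (f := fun s => -x s) (f' := fun s => -x' s)
    (B := fun _ => -m) (B' := 0)
    (fun s hs => (hx s hs.1).continuousAt.continuousWithinAt.neg)
    (fun s hs => (hx s hs.1).neg.hasDerivWithinAt) (neg_le_neg h₀)
    (fun _ => hasDerivAt_const _ _)
    (fun s hs h => neg_lt_zero.2 (hm s hs.1 (neg_inj.1 h))) ⟨ht, le_rfl⟩
  exact neg_le_neg_iff.1 this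

noncomputable def cascadeThreshold (α : ℕ → ℝ → ℝ) (c : ℝ) : ℕ → ℝ
  | 0 => c
  | k + 1 => min (cascadeThreshold α c k) (-α (k + 1) (-cascadeThreshold α c k) / 2)

section Threshold

variable {α : ℕ → ℝ → ℝ} {c : ℝ} {r : ℕ}

lemma cascadeThreshold_antitone : Antitone (cascadeThreshold α c) :=
  antitone_nat_of_succ_le fun _ => min_le_left _ _

lemma cascadeThreshold_le (k : ℕ) : cascadeThreshold α c k ≤ c :=
  cascadeThreshold_antitone (Nat.zero_le k)

variable (hα : ∀ k, 1 ≤ k → k ≤ r → ∀ x < 0, α k x < 0) (hc : 0 < c)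
include hα hc

lemma cascadeThreshold_pos : ∀ k ≤ r, 0 < cascadeThreshold α c k
  | 0, _ => hc
  | k + 1, hk => lt_min (cascadeThreshold_pos k (by omega))
      (half_pos (neg_pos.2 (hα (k + 1) (by omega) hk _
        (neg_neg_of_pos (cascadeThreshold_pos k (by omega))))))

lemma cascadeThreshold_succ_lt {k : ℕ} (hk : k < r) :
    cascadeThreshold α c (k + 1) < -α (k + 1) (-cascadeThreshold α c k) :=
  (min_le_right _ _).trans_lt (half_lt_self (neg_pos.2 (hα (k + 1) (by omega) hk _
    (neg_neg_of_pos (cascadeThreshold_pos hα hc k hk.le)))))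

end Threshold

theorem neg_cascadeThreshold_le_of_cascade {r : ℕ} {α : ℕ → ℝ → ℝ}
    (hα : ∀ k, 1 ≤ k → k ≤ r → ∀ x < 0, α k x < 0) {c : ℝ} (hc : 0 < c) {t₀ : ℝ} {q : ℝ → ℝ}
    (hq : ∀ t ∈ Ici t₀, 0 ≤ q t) {x : ℝ → Fin r → ℝ}
    (hx : ∀ i : Fin r, ∀ t ∈ Ici t₀, HasDerivAt (fun s => x s i)
      (-α (i + 1) (x t i) + if hi : i.val + 1 < r then x t ⟨i + 1, hi⟩ else q t) t)
    (h₀ : ∀ i : Fin r, -cascadeThreshold α c i ≤ x t₀ i) :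
    ∀ i : Fin r, ∀ t ∈ Ici t₀, -cascadeThreshold α c i ≤ x t i := by
  set b := cascadeThreshold α c
  suffices h : ∀ k (hk : k ≤ r) (hkr : k < r), ∀ t ∈ Ici t₀, -b k ≤ x t ⟨k, hkr⟩ from
    fun i => h i i.2.le i.2
  intro k hk
  induction hk using Nat.decreasingInduction with
  | self => exact fun h => absurd h (lt_irrefl r)
  | of_succ k hk ih =>
    intro _
    have hinput : ∀ t ∈ Ici t₀, -b (k + 1) ≤ if hi : k + 1 < r then x t ⟨k + 1, hi⟩ else q t := by
      intro t ht
      split_ifs with hi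
      · exact ih hi t ht
      · linarith [hq t ht, cascadeThreshold_pos hα hc (k + 1) hk]
    refine const_le_image_of_deriv_pos_boundary (hx ⟨k, hk⟩) (h₀ ⟨k, hk⟩) fun t ht hxt => ?_
    rw [hxt]
    linarith [hinput t ht, cascadeThreshold_succ_lt hα hc hk]

theorem cascade_orthant_uniformly_stable_general {r : ℕ} (t₀ : ℝ)
    (α : ℕ → ℝ → ℝ)
    (hα : ∀ k, 1 ≤ k → k ≤ r →
      ContDiff ℝ 1 (α k) ∧ StrictMono (α k) ∧ α k 0 = 0) :
    ∀ ε > (0 : ℝ), ∃ δ > (0 : ℝ),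
      ∀ q : ℝ → ℝ, ContinuousOn q (Set.Ici t₀) → (∀ t ∈ Set.Ici t₀, 0 ≤ q t) →
      ∀ P : ℝ → EuclideanSpace ℝ (Fin r) → EuclideanSpace ℝ (Fin r),
        (∀ t, ∀ v : EuclideanSpace ℝ (Fin r), ∀ i : Fin r, P t v i =
          -α (i.val + 1) (v i) +
            (if hi : i.val + 1 < r then v ⟨i.val + 1, hi⟩ else q t)) →
      ∀ ψ : ℝ → EuclideanSpace ℝ (Fin r),
        (∀ t ∈ Set.Ici t₀, HasDerivAt ψ (P t (ψ t)) t) →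
        Metric.infDist (ψ t₀) {v : EuclideanSpace ℝ (Fin r) | ∀ i, 0 ≤ v i} ≤ δ →
        ∀ t ∈ Set.Ici t₀,
          Metric.infDist (ψ t) {v : EuclideanSpace ℝ (Fin r) | ∀ i, 0 ≤ v i} ≤ ε := by
  have hneg : ∀ k, 1 ≤ k → k ≤ r → ∀ x < 0, α k x < 0 := fun k h1 h2 x hx =>
    (hα k h1 h2).2.2 ▸ (hα k h1 h2).2.1 hx
  intro ε hε
  set c := ε / (√r + 1)
  have hc : 0 < c := by positivity
  refine ⟨cascadeThreshold α c r, cascadeThreshold_pos hneg hc r le_rfl, ?_⟩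
  intro q _ hq P hP ψ hψ h₀ t ht
  have hcoord : ∀ i : Fin r, ∀ s ∈ Ici t₀, HasDerivAt (fun s => ψ s i)
      (-α (i + 1) (ψ s i) + if hi : i.val + 1 < r then ψ s ⟨i + 1, hi⟩ else q s) s :=
    fun i s hs => by
      rw [← hP]
      exact (PiLp.hasFDerivAt_apply (𝕜 := ℝ) 2 (ψ s) i).comp_hasDerivAt s (hψ s hs)
  have hstart : ∀ i : Fin r, -cascadeThreshold α c i ≤ ψ t₀ i := fun i =>
    calc -cascadeThreshold α c i ≤ -cascadeThreshold α c r :=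
          neg_le_neg (cascadeThreshold_antitone i.2.le)
      _ ≤ -infDist (ψ t₀) _ := neg_le_neg h₀
      _ ≤ ψ t₀ i := neg_le.1 (neg_apply_le_infDist_orthant _ i)
  have hbound := neg_cascadeThreshold_le_of_cascade hneg hc hq hcoord hstart
  calc infDist (ψ t) _ ≤ √(Fintype.card (Fin r)) * c := infDist_orthant_le_of_forall_neg_le hc.le
        fun i => (neg_le_neg (cascadeThreshold_le i)).trans (hbound i t ht)
    _ ≤ ε := by
      rw [Fintype.card_fin, mul_div_left_comm]
      exact mul_le_of_le_one_right hε.le ((div_le_one (by positivity)).2 (by linarith))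

/-- the nonnegative orthant is uniformly stable for the cascade
system: for every ε > 0 there is δ > 0, uniform over all nonnegative
continuous forcings `q` and all solutions `ψ`, such that
`dist(ψ(t₀), ℝ^r₊) ≤ δ` implies `dist(ψ(t), ℝ^r₊) ≤ ε` for all `t ≥ t₀`. -/
theorem cascade_orthant_uniformly_stable {r : ℕ} (hr : 1 ≤ r) (t₀ : ℝ)
    (α : ℕ → ℝ → ℝ)
    (hα : ∀ k, 1 ≤ k → k ≤ r →
      ContDiff ℝ 1 (α k) ∧ StrictMono (α k) ∧ α k 0 = 0) :
    ∀ ε > (0 : ℝ), ∃ δ > (0 : ℝ),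
      ∀ q : ℝ → ℝ, ContinuousOn q (Set.Ici t₀) → (∀ t ∈ Set.Ici t₀, 0 ≤ q t) →
      ∀ P : ℝ → EuclideanSpace ℝ (Fin r) → EuclideanSpace ℝ (Fin r),
        (∀ t, ∀ v : EuclideanSpace ℝ (Fin r), ∀ i : Fin r, P t v i =
          -α (i.val + 1) (v i) +
            (if hi : i.val + 1 < r then v ⟨i.val + 1, hi⟩ else q t)) →
      ∀ ψ : ℝ → EuclideanSpace ℝ (Fin r),
        (∀ t ∈ Set.Ici t₀, HasDerivAt ψ (P t (ψ t)) t) →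
        Metric.infDist (ψ t₀) {v : EuclideanSpace ℝ (Fin r) | ∀ i, 0 ≤ v i} ≤ δ →
        ∀ t ∈ Set.Ici t₀,
          Metric.infDist (ψ t) {v : EuclideanSpace ℝ (Fin r) | ∀ i, 0 ≤ v i} ≤ ε :=
  cascade_orthant_uniformly_stable_general t₀ α hα
end
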